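/- arXiv:1804.09927 — 6 statements merged into one kernel-verified Lean document; each statement's English description precedes it below -/
import Mathlib

section
/- Let E be a finite-dimensional real normed vector space, k ≥ 1, T > 0 and h > 0 with time instants t_n = n h. Let S : ℝ × E^k × (0,∞) → E^k be a k-multistep scheme generator. Assume there exist constants C₁ > 0 and C₂ > 0 such that for all t ∈ [0,T] and all Y, Z ∈ E^k: (i) 1 + |S(t,Y,h)|_∞ ≤ (1 + |Y|_∞)(1 + C₁ h), and (ii) |S(t,Y,h) − S(t,Z,h)|_∞ ≤ |Y − Z|_∞ (1 + C₂ h (1 + |Y|_∞)). Then the scheme is stable under perturbation: for every numerical solution (Y_n)_{n ≥ k−1} satisfying Y_{n+1} = S(t_n, Y_n, h), and every perturbed solution (Z_n) satisfying Z_{k−1} = Y_{k−1} + ξ_{k−1} and Z_{n+1} = S(t_n, Z_n, h) + ξ_{n+1} for n ≥ k−1, one has max_{k−1 ≤ n ≤ T/h} |Y_n − Z_n|_∞ ≤ L_s · Σ_{k−1 ≤ n ≤ T/h} |ξ_n|_∞, where L_s = e^{C★ T} with C★ = C₂ e^{C₁ T}(1 + |Y_{k−1}|_∞). -/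
/-- Stability under perturbation of a k-multistep scheme generator
satisfying the two relaxed stability conditions. -/
theorem stability_under_perturbation
    {E : Type*} [NormedAddCommGroup E] [NormedSpace ℝ E] [FiniteDimensional ℝ E]
    (k : ℕ) (hk : 1 ≤ k) (T h : ℝ) (hT : 0 < T) (hh : 0 < h)
    (s : ℝ → (Fin k → E) → E)
    (S : ℝ → (Fin k → E) → Fin k → E)
    (hS : ∀ t Y (i : Fin k),
      S t Y i = if hi : (i : ℕ) + 1 < k then Y ⟨(i : ℕ) + 1, hi⟩ else s t Y)
    (C₁ C₂ : ℝ) (hC₁ : 0 < C₁) (hC₂ : 0 < C₂)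
    (hbound : ∀ t ∈ Set.Icc (0 : ℝ) T, ∀ Y : Fin k → E,
      1 + ‖S t Y‖ ≤ (1 + ‖Y‖) * (1 + C₁ * h))
    (hlip : ∀ t ∈ Set.Icc (0 : ℝ) T, ∀ Y Z : Fin k → E,
      ‖S t Y - S t Z‖ ≤ ‖Y - Z‖ * (1 + C₂ * h * (1 + ‖Y‖)))
    (Y Z ξ : ℕ → Fin k → E)
    (hY : ∀ n, k - 1 ≤ n → Y (n + 1) = S (n * h) (Y n))
    (hZ0 : Z (k - 1) = Y (k - 1) + ξ (k - 1))
    (hZ : ∀ n, k - 1 ≤ n → Z (n + 1) = S (n * h) (Z n) + ξ (n + 1)) :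
    ∀ n ∈ Finset.Icc (k - 1) ⌊T / h⌋₊,
      ‖Y n - Z n‖ ≤
        Real.exp (C₂ * Real.exp (C₁ * T) * (1 + ‖Y (k - 1)‖) * T) *
          ∑ m ∈ Finset.Icc (k - 1) ⌊T / h⌋₊, ‖ξ m‖ := by
  set N := ⌊T / h⌋₊ with hNdef
  set C : ℝ := C₂ * Real.exp (C₁ * T) * (1 + ‖Y (k - 1)‖) with hCdef
  have hCpos : 0 < C := by
    have := Real.exp_pos (C₁ * T)
    have := norm_nonneg (Y (k - 1))
    positivity
  have htn : ∀ n : ℕ, n ≤ N → (n : ℝ) * h ≤ T := by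
    intro n hn
    have h1 : (n : ℝ) ≤ T / h := by
      exact_mod_cast (Nat.le_floor_iff (by positivity)).mp hn
    calc (n : ℝ) * h ≤ (T / h) * h := by nlinarith
      _ = T := by field_simp
  have hmemIcc : ∀ n : ℕ, n ≤ N → (n : ℝ) * h ∈ Set.Icc (0 : ℝ) T := by
    intro n hn
    exact ⟨by positivity, htn n hn⟩
  -- growth bound on Y
  have hgrow : ∀ n, k - 1 ≤ n → n ≤ N →
      1 + ‖Y n‖ ≤ (1 + ‖Y (k - 1)‖) * Real.exp (C₁ * n * h) := by
    intro n hn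
    induction n, hn using Nat.le_induction with
    | base =>
      intro _
      have h1 : (1 : ℝ) ≤ Real.exp (C₁ * (k - 1 : ℕ) * h) :=
        Real.one_le_exp (by positivity)
      nlinarith [norm_nonneg (Y (k - 1))]
    | succ n hn ih =>
      intro hn1
      have hnN : n ≤ N := le_of_lt (Nat.lt_of_lt_of_le (Nat.lt_succ_self n) hn1)
      have hstep := hbound _ (hmemIcc n hnN) (Y n)
      rw [← hY n hn] at hstep
      have hexp : C₁ * h + 1 ≤ Real.exp (C₁ * h) := Real.add_one_le_exp (C₁ * h)
      have ih' := ih hnN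
      have hYpos : (0 : ℝ) < 1 + ‖Y n‖ := by positivity
      have hmul : (1 + ‖Y n‖) * (1 + C₁ * h) ≤
          ((1 + ‖Y (k - 1)‖) * Real.exp (C₁ * n * h)) * Real.exp (C₁ * h) := by
        have h2 : (0 : ℝ) < 1 + C₁ * h := by positivity
        have := mul_le_mul ih' (by linarith : (1 : ℝ) + C₁ * h ≤ Real.exp (C₁ * h))
          (le_of_lt h2) (by positivity)
        linarith
      have hexpadd : Real.exp (C₁ * n * h) * Real.exp (C₁ * h)
          = Real.exp (C₁ * (n + 1 : ℕ) * h) := by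
        rw [← Real.exp_add]; congr 1; push_cast; ring
      calc 1 + ‖Y (n + 1)‖ ≤ (1 + ‖Y n‖) * (1 + C₁ * h) := hstep
        _ ≤ ((1 + ‖Y (k - 1)‖) * Real.exp (C₁ * n * h)) * Real.exp (C₁ * h) := hmul
        _ = (1 + ‖Y (k - 1)‖) * Real.exp (C₁ * (n + 1 : ℕ) * h) := by
            rw [mul_assoc, hexpadd]
  -- error recursion bound
  have herr : ∀ n, k - 1 ≤ n → n ≤ N →
      ‖Y n - Z n‖ ≤ Real.exp (C * n * h) * ∑ m ∈ Finset.Icc (k - 1) n, ‖ξ m‖ := by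
    intro n hn
    induction n, hn using Nat.le_induction with
    | base =>
      intro _
      have h1 : (1 : ℝ) ≤ Real.exp (C * (k - 1 : ℕ) * h) :=
        Real.one_le_exp (by positivity)
      rw [hZ0]
      simp only [Finset.Icc_self, Finset.sum_singleton]
      have : Y (k - 1) - (Y (k - 1) + ξ (k - 1)) = -ξ (k - 1) := by abel
      rw [this, norm_neg]
      nlinarith [norm_nonneg (ξ (k - 1))]
    | succ n hn ih =>
      intro hn1
      have hnN : n ≤ N := le_of_lt (Nat.lt_of_lt_of_le (Nat.lt_succ_self n) hn1)
      have ih' := ih hnN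
      -- one-step estimate
      have hYZ : Y (n + 1) - Z (n + 1)
          = (S ((n : ℝ) * h) (Y n) - S ((n : ℝ) * h) (Z n)) - ξ (n + 1) := by
        rw [hY n hn, hZ n hn]; abel
      have hstep : ‖Y (n + 1) - Z (n + 1)‖ ≤
          ‖Y n - Z n‖ * (1 + C₂ * h * (1 + ‖Y n‖)) + ‖ξ (n + 1)‖ := by
        rw [hYZ]
        calc ‖(S ((n : ℝ) * h) (Y n) - S ((n : ℝ) * h) (Z n)) - ξ (n + 1)‖
            ≤ ‖S ((n : ℝ) * h) (Y n) - S ((n : ℝ) * h) (Z n)‖ + ‖ξ (n + 1)‖ :=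
              norm_sub_le _ _
          _ ≤ ‖Y n - Z n‖ * (1 + C₂ * h * (1 + ‖Y n‖)) + ‖ξ (n + 1)‖ := by
              have := hlip _ (hmemIcc n hnN) (Y n) (Z n)
              linarith
      -- 1 + C₂ h (1+‖Y n‖) ≤ 1 + C h ≤ exp (C h)
      have hY' : 1 + ‖Y n‖ ≤ (1 + ‖Y (k - 1)‖) * Real.exp (C₁ * T) := by
        have h1 := hgrow n hn hnN
        have h2 : Real.exp (C₁ * n * h) ≤ Real.exp (C₁ * T) := by
          apply Real.exp_le_exp.mpr
          have := htn n hnN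
          nlinarith
        have h3 : (0 : ℝ) ≤ 1 + ‖Y (k - 1)‖ := by positivity
        nlinarith
      have hfac : 1 + C₂ * h * (1 + ‖Y n‖) ≤ Real.exp (C * h) := by
        have h1 : C₂ * h * (1 + ‖Y n‖) ≤ C * h := by
          have h0 := mul_le_mul_of_nonneg_left hY' (le_of_lt (mul_pos hC₂ hh))
          rw [hCdef]
          nlinarith [h0]
        have h2 : C * h + 1 ≤ Real.exp (C * h) := Real.add_one_le_exp (C * h)
        linarith
      have hnorm0 : (0 : ℝ) ≤ ‖Y n - Z n‖ := norm_nonneg _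
      have hsum0 : (0 : ℝ) ≤ ∑ m ∈ Finset.Icc (k - 1) n, ‖ξ m‖ :=
        Finset.sum_nonneg fun _ _ => norm_nonneg _
      have hfac0 : (0 : ℝ) ≤ 1 + C₂ * h * (1 + ‖Y n‖) := by positivity
      have hmul : ‖Y n - Z n‖ * (1 + C₂ * h * (1 + ‖Y n‖)) ≤
          (Real.exp (C * n * h) * ∑ m ∈ Finset.Icc (k - 1) n, ‖ξ m‖) *
            Real.exp (C * h) := by
        exact mul_le_mul ih' hfac hfac0 (by positivity)
      have hexpadd : Real.exp (C * n * h) * Real.exp (C * h)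
          = Real.exp (C * (n + 1 : ℕ) * h) := by
        rw [← Real.exp_add]; congr 1; push_cast; ring
      have hone : (1 : ℝ) ≤ Real.exp (C * (n + 1 : ℕ) * h) :=
        Real.one_le_exp (by positivity)
      have hsumsucc : ∑ m ∈ Finset.Icc (k - 1) (n + 1), ‖ξ m‖
          = (∑ m ∈ Finset.Icc (k - 1) n, ‖ξ m‖) + ‖ξ (n + 1)‖ := by
        rw [← Finset.sum_Icc_succ_top (by omega : k - 1 ≤ n + 1)]
      calc ‖Y (n + 1) - Z (n + 1)‖
          ≤ ‖Y n - Z n‖ * (1 + C₂ * h * (1 + ‖Y n‖)) + ‖ξ (n + 1)‖ := hstep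
        _ ≤ (Real.exp (C * n * h) * ∑ m ∈ Finset.Icc (k - 1) n, ‖ξ m‖) *
              Real.exp (C * h) + ‖ξ (n + 1)‖ := by linarith
        _ = Real.exp (C * (n + 1 : ℕ) * h) * (∑ m ∈ Finset.Icc (k - 1) n, ‖ξ m‖)
              + ‖ξ (n + 1)‖ := by rw [mul_right_comm, hexpadd]
        _ ≤ Real.exp (C * (n + 1 : ℕ) * h) *
              ∑ m ∈ Finset.Icc (k - 1) (n + 1), ‖ξ m‖ := by
            rw [hsumsucc, mul_add]
            have h4 : ‖ξ (n + 1)‖ ≤ Real.exp (C * (n + 1 : ℕ) * h) * ‖ξ (n + 1)‖ :=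
              le_mul_of_one_le_left (norm_nonneg _) hone
            linarith
  -- conclude
  intro n hn
  rw [Finset.mem_Icc] at hn
  obtain ⟨hn1, hn2⟩ := hn
  have h1 := herr n hn1 hn2
  have h2 : Real.exp (C * n * h) ≤ Real.exp (C * T) := by
    apply Real.exp_le_exp.mpr
    have := htn n hn2
    nlinarith
  have h3 : ∑ m ∈ Finset.Icc (k - 1) n, ‖ξ m‖ ≤
      ∑ m ∈ Finset.Icc (k - 1) N, ‖ξ m‖ := by
    apply Finset.sum_le_sum_of_subset_of_nonneg
    · exact Finset.Icc_subset_Icc_right hn2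
    · intro _ _ _; exact norm_nonneg _
  have hsum0 : (0 : ℝ) ≤ ∑ m ∈ Finset.Icc (k - 1) n, ‖ξ m‖ :=
    Finset.sum_nonneg fun _ _ => norm_nonneg _
  calc ‖Y n - Z n‖ ≤ Real.exp (C * n * h) * ∑ m ∈ Finset.Icc (k - 1) n, ‖ξ m‖ := h1
    _ ≤ Real.exp (C * T) * ∑ m ∈ Finset.Icc (k - 1) N, ‖ξ m‖ :=
        mul_le_mul h2 h3 hsum0 (Real.exp_pos _).le
end

section
/- Let E be a finite-dimensional real normed vector space, k ≥ 1, T > 0 and h > 0 with t_n = n h. Let S : ℝ × E^k × (0,∞) → E^k be a k-multistep scheme generator satisfying, for constants C₁, C₂ > 0 and all t ∈ [0,T], Y, Z ∈ E^k: 1 + |S(t,Y,h)|_∞ ≤ (1 + |Y|_∞)(1 + C₁ h) and |S(t,Y,h) − S(t,Z,h)|_∞ ≤ |Y − Z|_∞ (1 + C₂ h (1 + |Y|_∞)). Let Y : [(k−1)h, T] → E^k and suppose the scheme is consistent of order p along Y, i.e. the local errors ε(t_n,h) = Y(t_{n+1}) − S(t_n, Y(t_n), h) satisfy max_{k−1 ≤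 n ≤ T/h} |ε(t_n,h)|_∞ ≤ L_c h^{p+1} for some constant L_c > 0. Then every numerical solution (Y_n) with Y_{n+1} = S(t_n, Y_n, h) satisfies max_{k−1 ≤ n ≤ T/h} |Y(t_n) − Y_n|_∞ ≤ L_s L_c T h^p + L_s |ξ₀|_∞, where ξ₀ = Y(t_{k−1}) − Y_{k−1} and L_s = e^{C★ T} with C★ = C₂ e^{C₁ T}(1 + |Y_{k−1}|_∞). -/
/-!
By the growth bound and a discrete Grönwall inequality the numerical solution stays below
`(1 + |Y_{k-1}|) e^{C₁ T}`, so along it the Lipschitz factor of one step is at most `1 + C★ h`.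
Splitting the global error as `Y(t_{n+1}) - S(t_n, Y(t_n)) + S(t_n, Y(t_n)) - S(t_n, Y_n)` gives
`e_{n+1} ≤ (1 + C★ h) e_n + L_c h^{p+1}`, and Grönwall over at most `T / h` steps concludes.
-/

open Real

theorem discrete_gronwall_of_lt {u : ℕ → ℝ} {c b : ℝ} {M : ℕ} (hu_nonneg : ∀ m, 0 ≤ u m)
    (hc : 0 ≤ c) (hb : 0 ≤ b) (hu : ∀ m < M, u (m + 1) ≤ (1 + c) * u m + b) {m : ℕ}
    (hm : m ≤ M) : u m ≤ (u 0 + m * b) * exp (m * c) := by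
  -- freeze the sequence after step `M`, so that the recurrence holds for every index
  have hfrozen : ∀ j ≥ 0, u (min (j + 1) M) ≤ (1 + c) * u (min j M) + b := by
    intro j _
    rcases lt_or_ge j M with hj | hj
    · rw [min_eq_left (by omega : j + 1 ≤ M), min_eq_left hj.le]
      exact hu j hj
    · rw [min_eq_right (by omega : M ≤ j + 1), min_eq_right hj]
      nlinarith [hu_nonneg M]
  have := discrete_gronwall (u := fun j => u (min j M)) (c := fun _ => c) (b := fun _ => b)
    (hu_nonneg _) hfrozen (fun _ _ => hc) (fun _ _ => hb) (Nat.zero_le m)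
  simpa [min_eq_left hm] using this

section OneStep

variable {F : Type*} [SeminormedAddCommGroup F] {Φ : ℕ → F → F} {x u : ℕ → F}
  {h C₁ C₂ δ : ℝ} {M : ℕ}

theorem one_add_norm_le_of_growth (hh : 0 ≤ h) (hC₁ : 0 ≤ C₁)
    (hgrowth : ∀ m < M, ∀ y, 1 + ‖Φ m y‖ ≤ (1 + ‖y‖) * (1 + C₁ * h))
    (hx : ∀ m < M, x (m + 1) = Φ m (x m)) {m : ℕ} (hm : m ≤ M) :
    1 + ‖x m‖ ≤ (1 + ‖x 0‖) * exp (C₁ * (M * h)) := by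
  have hgronwall := discrete_gronwall_of_lt (u := fun j => 1 + ‖x j‖) (c := C₁ * h) (b := 0)
    (fun _ => by positivity) (by positivity) le_rfl
    (fun j hj => by simpa [hx j hj, mul_comm] using hgrowth j hj (x j)) hm
  refine hgronwall.trans ?_
  rw [mul_zero, add_zero]
  gcongr _ * exp ?_
  calc (m : ℝ) * (C₁ * h) = C₁ * (m * h) := by ring
    _ ≤ C₁ * (M * h) := by gcongr

theorem norm_sub_le_of_stable_of_consistent (hh : 0 ≤ h) (hC₁ : 0 ≤ C₁) (hC₂ : 0 ≤ C₂)
    (hδ : 0 ≤ δ) (hgrowth : ∀ m < M, ∀ y, 1 + ‖Φ m y‖ ≤ (1 + ‖y‖) * (1 + C₁ * h))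
    (hlip : ∀ m < M, ∀ y z, ‖Φ m y - Φ m z‖ ≤ ‖y - z‖ * (1 + C₂ * h * (1 + ‖y‖)))
    (hx : ∀ m < M, x (m + 1) = Φ m (x m)) (hu : ∀ m < M, ‖u (m + 1) - Φ m (u m)‖ ≤ δ)
    {m : ℕ} (hm : m ≤ M) :
    ‖u m - x m‖ ≤
      (‖u 0 - x 0‖ + m * δ) * exp (C₂ * exp (C₁ * (M * h)) * (1 + ‖x 0‖) * (m * h)) := by
  set Cstar := C₂ * exp (C₁ * (M * h)) * (1 + ‖x 0‖)
  have hstep : ∀ j < M, ‖u (j + 1) - x (j + 1)‖ ≤ (1 + Cstar * h) * ‖u j - x j‖ + δ := by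
    intro j hj
    have hfactor : 1 + C₂ * h * (1 + ‖x j‖) ≤ 1 + Cstar * h := by
      have hxj := one_add_norm_le_of_growth hh hC₁ hgrowth hx hj.le
      have : C₂ * h * (1 + ‖x j‖) ≤ C₂ * h * ((1 + ‖x 0‖) * exp (C₁ * (M * h))) := by gcongr
      linarith
    calc ‖u (j + 1) - x (j + 1)‖
        ≤ ‖u (j + 1) - Φ j (u j)‖ + ‖Φ j (x j) - Φ j (u j)‖ := by
          rw [hx j hj, norm_sub_rev (Φ j (x j))]
          exact norm_sub_le_norm_sub_add_norm_sub _ _ _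
      _ ≤ δ + ‖x j - u j‖ * (1 + Cstar * h) := by
          gcongr
          · exact hu j hj
          · exact (hlip j hj _ _).trans (by gcongr)
      _ = (1 + Cstar * h) * ‖u j - x j‖ + δ := by rw [norm_sub_rev]; ring
  have hCstar : 0 ≤ Cstar * h := by positivity
  refine (discrete_gronwall_of_lt (u := fun j => ‖u j - x j‖) (fun _ => norm_nonneg _) hCstar
    hδ hstep hm).trans_eq ?_
  congr 2
  ring

end OneStep

theorem natCast_mul_le_of_le_floor_div {n : ℕ} {T h : ℝ} (hT : 0 ≤ T) (hh : 0 < h)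
    (hn : n ≤ ⌊T / h⌋₊) : (n : ℝ) * h ≤ T :=
  (le_div_iff₀ hh).1 ((Nat.cast_le.2 hn).trans (Nat.floor_le (by positivity)))

theorem convergence_of_stable_consistent_scheme_general
    {E : Type*} [NormedAddCommGroup E]
    (k : ℕ) (T h : ℝ) (hT : 0 < T) (hh : 0 < h)
    (S : ℝ → (Fin k → E) → Fin k → E)
    (C₁ C₂ : ℝ) (hC₁ : 0 < C₁) (hC₂ : 0 < C₂)
    (hbound : ∀ t ∈ Set.Icc (0 : ℝ) T, ∀ Y : Fin k → E,
      1 + ‖S t Y‖ ≤ (1 + ‖Y‖) * (1 + C₁ * h))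
    (hlip : ∀ t ∈ Set.Icc (0 : ℝ) T, ∀ Y Z : Fin k → E,
      ‖S t Y - S t Z‖ ≤ ‖Y - Z‖ * (1 + C₂ * h * (1 + ‖Y‖)))
    (Yex : ℝ → Fin k → E) (p : ℕ) (Lc : ℝ) (hLc : 0 < Lc)
    (hconsist : ∀ n ∈ Finset.Icc (k - 1) ⌊T / h⌋₊,
      ‖Yex ((n + 1 : ℕ) * h) - S (n * h) (Yex (n * h))‖ ≤ Lc * h ^ (p + 1))
    (Y : ℕ → Fin k → E)
    (hY : ∀ n, k - 1 ≤ n → Y (n + 1) = S (n * h) (Y n)) :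
    ∀ n ∈ Finset.Icc (k - 1) ⌊T / h⌋₊,
      ‖Yex (n * h) - Y n‖ ≤
        Real.exp (C₂ * Real.exp (C₁ * T) * (1 + ‖Y (k - 1)‖) * T) * Lc * T * h ^ p +
        Real.exp (C₂ * Real.exp (C₁ * T) * (1 + ‖Y (k - 1)‖) * T) *
          ‖Yex ((k - 1 : ℕ) * h) - Y (k - 1)‖ := by
  intro n hn
  set K := k - 1
  set N := ⌊T / h⌋₊
  obtain ⟨hKn, hnN⟩ := Finset.mem_Icc.1 hn
  obtain ⟨m, rfl⟩ := Nat.exists_eq_add_of_le hKn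
  have hmem : ∀ j ≤ N, (j : ℝ) * h ∈ Set.Icc 0 T := fun j hj =>
    ⟨by positivity, natCast_mul_le_of_le_floor_div hT.le hh hj⟩
  have herror := norm_sub_le_of_stable_of_consistent (Φ := fun j => S ((K + j : ℕ) * h))
    (x := fun j => Y (K + j)) (u := fun j => Yex ((K + j : ℕ) * h)) (M := N - K)
    hh.le hC₁.le hC₂.le (by positivity)
    (fun j hj => hbound _ (hmem _ (by omega))) (fun j hj => hlip _ (hmem _ (by omega)))
    (fun j _ => hY (K + j) (Nat.le_add_right _ _))
    (fun j hj => hconsist (K + j) (Finset.mem_Icc.2 ⟨Nat.le_add_right _ _, by omega⟩))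
    (m := m) (by omega)
  have hMh : ((N - K : ℕ) : ℝ) * h ≤ T := natCast_mul_le_of_le_floor_div hT.le hh (Nat.sub_le _ _)
  have hmh : (m : ℝ) * h ≤ T := natCast_mul_le_of_le_floor_div hT.le hh (by omega)
  calc ‖Yex ((K + m : ℕ) * h) - Y (K + m)‖
      ≤ (‖Yex (K * h) - Y K‖ + m * h * (Lc * h ^ p)) *
          exp (C₂ * exp (C₁ * ((N - K : ℕ) * h)) * (1 + ‖Y K‖) * (m * h)) := by
        exact herror.trans_eq (by rw [Nat.add_zero, pow_succ]; ring)
    _ ≤ (‖Yex (K * h) - Y K‖ + T * (Lc * h ^ p)) * exp (C₂ * exp (C₁ * T) * (1 + ‖Y K‖) * T) := by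
        gcongr
    _ = _ := by ring

/-- Stability + consistency of order p implies convergence of order p. -/
theorem convergence_of_stable_consistent_scheme
    {E : Type*} [NormedAddCommGroup E] [NormedSpace ℝ E] [FiniteDimensional ℝ E]
    (k : ℕ) (hk : 1 ≤ k) (T h : ℝ) (hT : 0 < T) (hh : 0 < h)
    (s : ℝ → (Fin k → E) → E)
    (S : ℝ → (Fin k → E) → Fin k → E)
    (hS : ∀ t Y (i : Fin k),
      S t Y i = if hi : (i : ℕ) + 1 < k then Y ⟨(i : ℕ) + 1, hi⟩ else s t Y)
    (C₁ C₂ : ℝ) (hC₁ : 0 < C₁) (hC₂ : 0 < C₂)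
    (hbound : ∀ t ∈ Set.Icc (0 : ℝ) T, ∀ Y : Fin k → E,
      1 + ‖S t Y‖ ≤ (1 + ‖Y‖) * (1 + C₁ * h))
    (hlip : ∀ t ∈ Set.Icc (0 : ℝ) T, ∀ Y Z : Fin k → E,
      ‖S t Y - S t Z‖ ≤ ‖Y - Z‖ * (1 + C₂ * h * (1 + ‖Y‖)))
    (Yex : ℝ → Fin k → E) (p : ℕ) (Lc : ℝ) (hLc : 0 < Lc)
    (hconsist : ∀ n ∈ Finset.Icc (k - 1) ⌊T / h⌋₊,
      ‖Yex ((n + 1 : ℕ) * h) - S (n * h) (Yex (n * h))‖ ≤ Lc * h ^ (p + 1))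
    (Y : ℕ → Fin k → E)
    (hY : ∀ n, k - 1 ≤ n → Y (n + 1) = S (n * h) (Y n)) :
    ∀ n ∈ Finset.Icc (k - 1) ⌊T / h⌋₊,
      ‖Yex (n * h) - Y n‖ ≤
        Real.exp (C₂ * Real.exp (C₁ * T) * (1 + ‖Y (k - 1)‖) * T) * Lc * T * h ^ p +
        Real.exp (C₂ * Real.exp (C₁ * T) * (1 + ‖Y (k - 1)‖) * T) *
          ‖Yex ((k - 1 : ℕ) * h) - Y (k - 1)‖ :=
  convergence_of_stable_consistent_scheme_general k T h hT hh S C₁ C₂ hC₁ hC₂ hbound hlip Yex p Lc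
    hLc hconsist Y hY
end

section
/- Let the functions φ_j be defined recursively by φ_0(z) = e^z, φ_{j+1}(z) = (φ_j(z) − 1/j!)/z for z ≠ 0, and φ_j(0) = 1/j!. For every a ∈ ℝ, h > 0 and y, γ₁, γ₂, γ₃, γ₄ ∈ ℝ, setting w₁ = a y + γ₁ and w_j = γ_j + a h w_{j−1} for j = 2, 3, 4, one has e^{a h} y + h Σ_{j=1}^{4} φ_j(a h) γ_j = y + h ( w₁ + w₂/2 + w₃/6 + φ_4(a h) w₄ ). -/
/-- The exponential propagation functions φ_j: φ_0(z) = e^z,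
φ_{j+1}(z) = (φ_j(z) - 1/j!)/z for z ≠ 0, and φ_j(0) = 1/j!. -/
noncomputable def phi : ℕ → ℝ → ℝ
  | 0, z => Real.exp z
  | j + 1, z =>
      if z = 0 then 1 / (Nat.factorial (j + 1)) else (phi j z - 1 / (Nat.factorial j)) / z

/-
Every φ_j satisfies φ_j(z) = 1/j! + z φ_{j+1}(z), also at z = 0. Using it to express e^z and
φ_1, φ_2, φ_3 through φ_4 turns both sides into polynomials in a, h, y, γ_j and φ_4(a h),
and the identity becomes a ring identity.
-/

open Nat

theorem phi_zero_apply (z : ℝ) : phi 0 z = Real.exp z := rfl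

theorem phi_apply_zero (j : ℕ) : phi j 0 = 1 / j ! := by
  cases j <;> simp [phi]

theorem phi_succ_of_ne_zero (j : ℕ) {z : ℝ} (hz : z ≠ 0) :
    phi (j + 1) z = (phi j z - 1 / j !) / z := by
  simp [phi, hz]

theorem phi_eq_inv_factorial_add_mul_phi_succ (j : ℕ) (z : ℝ) :
    phi j z = 1 / j ! + z * phi (j + 1) z := by
  rcases eq_or_ne z 0 with rfl | hz
  · simp [phi_apply_zero]
  · rw [phi_succ_of_ne_zero j hz]
    field_simp
    ring

theorem eab4_horner_general (a h : ℝ) (y γ₁ γ₂ γ₃ γ₄ : ℝ)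
    (w₁ w₂ w₃ w₄ : ℝ)
    (hw₁ : w₁ = a * y + γ₁) (hw₂ : w₂ = γ₂ + a * h * w₁)
    (hw₃ : w₃ = γ₃ + a * h * w₂) (hw₄ : w₄ = γ₄ + a * h * w₃) :
    Real.exp (a * h) * y
        + h * (phi 1 (a * h) * γ₁ + phi 2 (a * h) * γ₂
             + phi 3 (a * h) * γ₃ + phi 4 (a * h) * γ₄)
      = y + h * (w₁ + w₂ / 2 + w₃ / 6 + phi 4 (a * h) * w₄) := by
  subst hw₁ hw₂ hw₃ hw₄
  rw [← phi_zero_apply, phi_eq_inv_factorial_add_mul_phi_succ 0,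
    phi_eq_inv_factorial_add_mul_phi_succ 1, phi_eq_inv_factorial_add_mul_phi_succ 2,
    phi_eq_inv_factorial_add_mul_phi_succ 3]
  simp only [factorial, Nat.cast_one]
  ring

/-- Horner-type reformulation of one EAB₄ step. -/
theorem eab4_horner (a h : ℝ) (hh : 0 < h) (y γ₁ γ₂ γ₃ γ₄ : ℝ)
    (w₁ w₂ w₃ w₄ : ℝ)
    (hw₁ : w₁ = a * y + γ₁) (hw₂ : w₂ = γ₂ + a * h * w₁)
    (hw₃ : w₃ = γ₃ + a * h * w₂) (hw₄ : w₄ = γ₄ + a * h * w₃) :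
    Real.exp (a * h) * y
        + h * (phi 1 (a * h) * γ₁ + phi 2 (a * h) * γ₂
             + phi 3 (a * h) * γ₃ + phi 4 (a * h) * γ₄)
      = y + h * (w₁ + w₂ / 2 + w₃ / 6 + phi 4 (a * h) * w₄) :=
  eab4_horner_general a h y γ₁ γ₂ γ₃ γ₄ w₁ w₂ w₃ w₄ hw₁ hw₂ hw₃ hw₄
end

section
/- Let a ∈ ℝ, h > 0, and let (y_n)_{n ≥ 0} and (b_n)_{n ≥ 0} be real sequences satisfying, for n ≥ 1, the EAB₂ recursion y_{n+1} = e^{a h} y_n + h ( φ_1(a h) b_n + φ_2(a h) (b_n − b_{n−1}) ). Define s_n = e^{a h} y_n − h φ_2(a h) b_{n−1} for n ≥ 1. Then for every n ≥ 1, s_{n+1} = e^{a h} s_n + h b_n φ_1(a h) ( e^{a h} + a h φ_2(a h) ). -/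
lemma phi1_key (z : ℝ) : Real.exp z - 1 = z * phi 1 z := by
  by_cases hz : z = 0
  · simp [hz, phi]
  · simp [phi, hz]
    field_simp

/-- Algebraic recursion for the auxiliary quantity
s_n = e^{ah} y_n − h φ₂(ah) b_{n−1} along the EAB₂ recursion. -/
theorem eab2_auxiliary_recursion (a h : ℝ) (hh : 0 < h)
    (y b : ℕ → ℝ)
    (hrec : ∀ n, 1 ≤ n →
      y (n + 1) = Real.exp (a * h) * y n
        + h * (phi 1 (a * h) * b n + phi 2 (a * h) * (b n - b (n - 1))))
    (s : ℕ → ℝ)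
    (hs : ∀ n, 1 ≤ n → s n = Real.exp (a * h) * y n - h * phi 2 (a * h) * b (n - 1)) :
    ∀ n, 1 ≤ n →
      s (n + 1) = Real.exp (a * h) * s n
        + h * b n * phi 1 (a * h) * (Real.exp (a * h) + a * h * phi 2 (a * h)) := by
  intro n hn
  have h1 := hrec n hn
  have h2 := hs n hn
  have h3 := hs (n + 1) (by omega)
  have hkey := phi1_key (a * h)
  simp only [Nat.add_sub_cancel] at h3
  rw [h3, h1, h2]
  linear_combination h * b n * phi 2 (a * h) * hkey
end

section
/- Let φ_2(z) = (e^z − 1 − z)/z² for z ≠ 0 and φ_2(0) = 1/2. Then for every z ∈ [−1, 0], e^z + z φ_2(z) ≥ 0; moreover for real z < −1 this expression is negative, so on the negative half-line the inequality e^z + z φ_2(z) ≥ 0 holds exactly for z ∈ [−1, 0]. -/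
lemma expr_eq (z : ℝ) (hz : z ≠ 0) :
    Real.exp z + z * phi 2 z = (z + 1) * (Real.exp z - 1) / z := by
  simp only [phi, if_neg hz, Nat.factorial]
  field_simp
  ring

/-- The sign of e^z + z φ₂(z) on the negative half-line:
nonnegative exactly on [−1, 0]. -/
theorem exp_add_mul_phi2_sign :
    (∀ z ∈ Set.Icc (-1 : ℝ) 0, 0 ≤ Real.exp z + z * phi 2 z) ∧
    (∀ z : ℝ, z < -1 → Real.exp z + z * phi 2 z < 0) := by
  constructor
  · rintro z ⟨h1, h2⟩
    rcases eq_or_lt_of_le h2 with rfl | hz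
    · simp [phi]
    · rw [expr_eq z hz.ne]
      have he : Real.exp z - 1 < 0 := by
        have := Real.exp_lt_one_iff.mpr hz
        linarith
      have h3 : (0:ℝ) ≤ z + 1 := by linarith
      have : (z + 1) * (Real.exp z - 1) ≤ 0 := mul_nonpos_of_nonneg_of_nonpos h3 he.le
      have := div_nonneg (neg_nonneg.mpr this) (neg_nonneg.mpr hz.le)
      rwa [neg_div_neg_eq] at this
  · intro z hz
    have hz0 : z < 0 := by linarith
    rw [expr_eq z hz0.ne]
    have he : Real.exp z - 1 < 0 := by
      have := Real.exp_lt_one_iff.mpr hz0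
      linarith
    have h3 : z + 1 < 0 := by linarith
    have : 0 < (z + 1) * (Real.exp z - 1) := mul_pos_of_neg_of_neg h3 he
    exact div_neg_of_pos_of_neg this hz0
end

section
/- Let a ≤ 0 and h > 0 with h ≤ 1/|a| (no restriction if a = 0), and let b : ℝ × ℝ → ℝ be a nonnegative function. Let t_n = n h and let (y_n)_{n ≥ 0} satisfy, for n ≥ 1, the EAB₂ recursion y_{n+1} = e^{a h} y_n + h ( φ_1(a h) b_n + φ_2(a h)(b_n − b_{n−1}) ) with b_j = b(t_j, y_j). If moreover e^{a h} y_1 − h φ_2(a h) b_0 ≥ 0, then y_n ≥ 0 for all n ≥ 2. -/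
/-!
The quantity `w n = e^{ah} y n - h φ₂(ah) b_{n-1}` drives the argument. The scheme reads
`y (n+1) = w n + h (φ₁ + φ₂)(ah) b_n`, and `w (n+1) = e^{ah} w n + h b_n (e^{ah}(φ₁ + φ₂) - φ₂)(ah)`.
Since `e^z (φ₁ + φ₂)(z) - φ₂(z) = (1 + z)(e^z - 1)² / z²`, the step restriction `-1 ≤ ah` makes
both forcing coefficients nonnegative, so `w` stays nonnegative from `w 1 ≥ 0` on, and with it `y`.
-/

lemma phi_one_of_ne_zero {z : ℝ} (hz : z ≠ 0) : phi 1 z = (Real.exp z - 1) / z := by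
  simp [phi, hz]

lemma phi_two_of_ne_zero {z : ℝ} (hz : z ≠ 0) : phi 2 z = ((Real.exp z - 1) / z - 1) / z := by
  simp [phi, hz]

lemma phi_one_nonneg {z : ℝ} (hz : z ≤ 0) : 0 ≤ phi 1 z := by
  rcases hz.eq_or_lt with rfl | hz
  · simp [phi]
  · rw [phi_one_of_ne_zero hz.ne]
    exact div_nonneg_of_nonpos (by linarith [Real.exp_le_one_iff.mpr hz.le]) hz.le

lemma phi_two_nonneg {z : ℝ} (hz : z ≤ 0) : 0 ≤ phi 2 z := by
  rcases hz.eq_or_lt with rfl | hz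
  · simp [phi]
  · rw [phi_two_of_ne_zero hz.ne, div_sub_one hz.ne]
    refine div_nonneg_of_nonpos (div_nonpos_of_nonneg_of_nonpos ?_ hz.le) hz.le
    linarith [Real.add_one_le_exp z]

lemma phi_two_le_exp_mul_phi_one_add_phi_two {z : ℝ} (hz₁ : -1 ≤ z) (hz₀ : z ≤ 0) :
    phi 2 z ≤ Real.exp z * (phi 1 z + phi 2 z) := by
  rcases hz₀.eq_or_lt with rfl | hz
  · simp [phi]
  · have identity : Real.exp z * (phi 1 z + phi 2 z) - phi 2 z
        = (z + 1) * (Real.exp z - 1) ^ 2 / z ^ 2 := by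
      have hz : z ≠ 0 := hz.ne
      rw [phi_one_of_ne_zero hz, phi_two_of_ne_zero hz]
      field_simp
      ring
    have : 0 ≤ (z + 1) * (Real.exp z - 1) ^ 2 / z ^ 2 := by
      have : 0 ≤ z + 1 := by linarith
      positivity
    linarith

lemma neg_one_le_mul_of_le_one_div_abs {a h : ℝ} (ha : a ≤ 0) (hstep : a ≠ 0 → h ≤ 1 / |a|) :
    -1 ≤ a * h := by
  rcases ha.eq_or_lt with rfl | ha
  · simp
  · have hah : h * |a| ≤ 1 := (le_div_iff₀ (abs_pos.mpr ha.ne)).mp (hstep ha.ne)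
    rw [abs_of_neg ha] at hah
    linarith

section TwoStepRecursion

variable {E c d : ℝ} {β y : ℕ → ℝ}

lemma mul_sub_mul_pred_nonneg_of_two_step (hE : 0 ≤ E) (hd : d ≤ E * c) (hβ : ∀ n, 0 ≤ β n)
    (hrec : ∀ n, 1 ≤ n → y (n + 1) = E * y n + c * β n - d * β (n - 1))
    (hinit : 0 ≤ E * y 1 - d * β 0) :
    ∀ n, 1 ≤ n → 0 ≤ E * y n - d * β (n - 1) := by
  intro n hn
  induction n, hn using Nat.le_induction with
  | base => simpa using hinit
  | succ n hn ih =>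
    have step : E * y (n + 1) - d * β n
        = E * (E * y n - d * β (n - 1)) + β n * (E * c - d) := by
      rw [hrec n hn]; ring
    rw [Nat.add_sub_cancel, step]
    have := hβ n
    have : 0 ≤ E * c - d := by linarith
    positivity

lemma nonneg_of_two_step (hE : 0 ≤ E) (hc : 0 ≤ c) (hd : d ≤ E * c) (hβ : ∀ n, 0 ≤ β n)
    (hrec : ∀ n, 1 ≤ n → y (n + 1) = E * y n + c * β n - d * β (n - 1))
    (hinit : 0 ≤ E * y 1 - d * β 0) :
    ∀ n, 2 ≤ n → 0 ≤ y n := by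
  intro n hn
  obtain ⟨m, rfl⟩ : ∃ m, n = m + 1 := ⟨n - 1, by omega⟩
  have hm : 1 ≤ m := by omega
  have hw := mul_sub_mul_pred_nonneg_of_two_step hE hd hβ hrec hinit m hm
  have := mul_nonneg hc (hβ m)
  rw [hrec m hm]
  linarith

end TwoStepRecursion

/-- Positivity of the EAB₂ scheme for y' = a y + b(t,y) with
a ≤ 0, b ≥ 0, under the step restriction h ≤ 1/|a| and a condition on the
initial data. -/
theorem eab2_positivity (a h : ℝ) (ha : a ≤ 0) (hh : 0 < h)
    (hstep : a ≠ 0 → h ≤ 1 / |a|)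
    (b : ℝ → ℝ → ℝ) (hb : ∀ t y, 0 ≤ b t y)
    (y : ℕ → ℝ)
    (hrec : ∀ n, 1 ≤ n →
      y (n + 1) = Real.exp (a * h) * y n
        + h * (phi 1 (a * h) * b ((n : ℝ) * h) (y n)
             + phi 2 (a * h) * (b ((n : ℝ) * h) (y n)
                 - b (((n - 1 : ℕ) : ℝ) * h) (y (n - 1)))))
    (hinit : 0 ≤ Real.exp (a * h) * y 1 - h * phi 2 (a * h) * b 0 (y 0)) :
    ∀ n, 2 ≤ n → 0 ≤ y n := by
  have hz₀ : a * h ≤ 0 := mul_nonpos_of_nonpos_of_nonneg ha hh.le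
  have hz₁ : -1 ≤ a * h := neg_one_le_mul_of_le_one_div_abs ha hstep
  refine nonneg_of_two_step (E := Real.exp (a * h)) (c := h * (phi 1 (a * h) + phi 2 (a * h)))
    (d := h * phi 2 (a * h)) (β := fun n => b ((n : ℝ) * h) (y n)) (Real.exp_pos _).le
    (mul_nonneg hh.le (add_nonneg (phi_one_nonneg hz₀) (phi_two_nonneg hz₀))) ?_
    (fun n => hb _ _) (fun n hn => by rw [hrec n hn]; ring) (by simpa using hinit)
  calc h * phi 2 (a * h) ≤ h * (Real.exp (a * h) * (phi 1 (a * h) + phi 2 (a * h))) :=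
        mul_le_mul_of_nonneg_left (phi_two_le_exp_mul_phi_one_add_phi_two hz₁ hz₀) hh.le
    _ = Real.exp (a * h) * (h * (phi 1 (a * h) + phi 2 (a * h))) := by ring
end
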